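/- arXiv:2310.16675 — 4 statements merged into one kernel-verified Lean document; each statement's English description precedes it below -/
import Mathlib

section
/- Let S_0, S_1, ..., S_n be real-valued random variables on a probability space that are independent and identically distributed. Define the conformal p-value p = (1 + #{i ∈ {1,...,n} : S_0 ≤ S_i}) / (n + 1). Then p is a p-variable, i.e., for every α ∈ (0,1), Pr(p ≤ α) ≤ α. -/
/-!
Whatever the data, at most `α (n + 1)` of the `n + 1` scores have p-value `≤ α`: the smallest of
them lies below all the others, so their number is at most one plus its rank count, that is, its
p-value times `n + 1`. For i.i.d. scores the joint law is invariant under permutations of the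
coordinates, so every score has the same probability of having p-value `≤ α`, and `n + 1` times
that probability is the expected number of such scores.
-/

open MeasureTheory ProbabilityTheory Finset
open scoped Classical ENNReal

namespace Conformal

variable {ι β : Type*} [Fintype ι]

section Rank

variable [LinearOrder β]

noncomputable def rankCount (x : ι → β) (j : ι) : ℕ := #{i | i ≠ j ∧ x j ≤ x i}

noncomputable def conformalPValue (x : ι → β) (j : ι) : ℝ :=
  (1 + rankCount x j) / Fintype.card ι

lemma rankCount_comp_perm (x : ι → β) (σ : Equiv.Perm ι) (j : ι) :
    rankCount (x ∘ σ) j = rankCount x (σ j) := by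
  refine card_bij' (fun i _ => σ i) (fun i _ => σ.symm i) ?_ ?_ (by simp) (by simp) <;>
    simp [σ.symm_apply_eq]

lemma conformalPValue_comp_perm (x : ι → β) (σ : Equiv.Perm ι) (j : ι) :
    conformalPValue (x ∘ σ) j = conformalPValue x (σ j) := by
  rw [conformalPValue, conformalPValue, rankCount_comp_perm]

lemma card_le_rankCount_add_one {x : ι → β} {A : Finset ι} {j : ι} (hj : j ∈ A)
    (hmin : ∀ i ∈ A, x j ≤ x i) : #A ≤ rankCount x j + 1 := by
  have hsub : A.erase j ⊆ ({i | i ≠ j ∧ x j ≤ x i} : Finset ι) := fun i hi => by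
    obtain ⟨hij, hi⟩ := mem_erase.mp hi
    simpa using ⟨hij, hmin i hi⟩
  have hcard := card_le_card hsub
  rw [card_erase_of_mem hj] at hcard
  unfold rankCount
  omega

lemma card_conformalPValue_le (x : ι → β) (α : ℝ) :
    (#{j | conformalPValue x j ≤ α} : ℝ≥0∞) ≤ ENNReal.ofReal (α * Fintype.card ι) := by
  set A : Finset ι := {j | conformalPValue x j ≤ α}
  obtain hA | hA := A.eq_empty_or_nonempty
  · simp [hA]
  obtain ⟨j, hjA, hmin⟩ := A.exists_min_image x hA
  have hj : conformalPValue x j ≤ α := (mem_filter.mp hjA).2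
  have hcard : (0 : ℝ) < Fintype.card ι := by
    exact_mod_cast Fintype.card_pos_iff.mpr ⟨j⟩
  rw [← ENNReal.ofReal_natCast]
  refine ENNReal.ofReal_le_ofReal ?_
  calc (#A : ℝ) ≤ 1 + rankCount x j := by
        exact_mod_cast (card_le_rankCount_add_one hjA hmin).trans_eq (add_comm _ _)
    _ ≤ α * Fintype.card ι := by
        rwa [conformalPValue, div_le_iff₀ hcard] at hj

end Rank

lemma sum_measure_eq_lintegral_card {Ω : Type*} [MeasurableSpace Ω] (μ : Measure Ω)
    {A : ι → Set Ω} (hA : ∀ i, MeasurableSet (A i)) :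
    ∑ i, μ (A i) = ∫⁻ ω, (#{i | ω ∈ A i} : ℝ≥0∞) ∂μ := by
  simp_rw [← lintegral_indicator_one (hA _)]
  rw [← lintegral_finsetSum _ fun i _ => (measurable_one.indicator (hA i))]
  refine lintegral_congr fun ω => ?_
  simp [Set.indicator_apply]

section Exchangeable

variable [MeasurableSpace β]

def Exchangeable (P : Measure (ι → β)) : Prop :=
  ∀ σ : Equiv.Perm ι, MeasurePreserving (fun x => x ∘ σ) P P

lemma exchangeable_pi (ν : Measure β) [SigmaFinite ν] :
    Exchangeable (Measure.pi fun _ : ι => ν) := fun σ => by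
  convert measurePreserving_piCongrLeft (fun _ : ι => ν) σ.symm using 1
  ext x i
  simp [MeasurableEquiv.coe_piCongrLeft, Equiv.piCongrLeft_apply]

variable [LinearOrder β] [TopologicalSpace β] [OrderClosedTopology β] [OpensMeasurableSpace β]
  [SecondCountableTopology β]

lemma measurable_rankCount (j : ι) : Measurable fun x : ι → β => rankCount x j := by
  simp only [rankCount, card_filter]
  refine Finset.measurable_sum _ fun i _ => Measurable.ite ?_ measurable_const measurable_const
  exact (MeasurableSet.const _).inter
    (measurableSet_le (measurable_pi_apply j) (measurable_pi_apply i))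

lemma measurable_conformalPValue (j : ι) : Measurable fun x : ι → β => conformalPValue x j :=
  ((measurable_from_nat.comp (measurable_rankCount j)).const_add 1).div_const _

theorem Exchangeable.measure_conformalPValue_le {P : Measure (ι → β)} [IsProbabilityMeasure P]
    (hP : Exchangeable P) (j : ι) (α : ℝ) :
    P {x | conformalPValue x j ≤ α} ≤ ENNReal.ofReal α := by
  set A : ι → Set (ι → β) := fun i => {x | conformalPValue x i ≤ α}
  have hA (i : ι) : MeasurableSet (A i) :=
    measurableSet_le (measurable_conformalPValue i) measurable_const
  have hAeq (i : ι) : P (A i) = P (A j) := by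
    have : A i = (fun x => x ∘ Equiv.swap j i) ⁻¹' A j := by
      ext x
      simp [A, conformalPValue_comp_perm]
    rw [this, (hP _).measure_preimage (hA j).nullMeasurableSet]
  have hcard : (Fintype.card ι : ℝ≥0∞) ≠ 0 := by
    exact_mod_cast (Fintype.card_pos_iff.mpr ⟨j⟩).ne'
  refine (ENNReal.mul_le_mul_iff_right hcard (ENNReal.natCast_ne_top _)).mp ?_
  calc (Fintype.card ι : ℝ≥0∞) * P (A j) = ∑ i, P (A i) := by simp [hAeq]
    _ = ∫⁻ x, (#{i | x ∈ A i} : ℝ≥0∞) ∂P := sum_measure_eq_lintegral_card P hA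
    _ ≤ ∫⁻ _, ENNReal.ofReal (α * Fintype.card ι) ∂P :=
        lintegral_mono fun x => card_conformalPValue_le x α
    _ = Fintype.card ι * ENNReal.ofReal α := by
        simp [ENNReal.ofReal_mul', mul_comm]

end Exchangeable

end Conformal

open Conformal

theorem conformal_p_value_is_p_variable_general
    {Ω : Type*} [MeasurableSpace Ω] (μ : Measure Ω) [IsProbabilityMeasure μ]
    (n : ℕ) (S : Fin (n + 1) → Ω → ℝ)
    (hmeas : ∀ i, Measurable (S i))
    (hindep : iIndepFun S μ)
    (hident : ∀ i, IdentDistrib (S i) (S 0) μ μ)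
    (α : ℝ) :
    μ {ω | (1 + ((Finset.univ.filter
        fun i : Fin (n + 1) => i ≠ 0 ∧ S 0 ω ≤ S i ω).card : ℝ)) / ((n : ℝ) + 1) ≤ α}
      ≤ ENNReal.ofReal α := by
  have hlaw : μ.map (fun ω i => S i ω) = Measure.pi fun _ => μ.map (S 0) := by
    rw [(iIndepFun_iff_map_fun_eq_pi_map fun i => (hmeas i).aemeasurable).mp hindep]
    simp_rw [(hident _).map_eq]
  have := Measure.isProbabilityMeasure_map (μ := μ) (hmeas 0).aemeasurable
  have h := (exchangeable_pi (μ.map (S 0))).measure_conformalPValue_le (0 : Fin (n + 1)) α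
  rw [← hlaw, Measure.map_apply (measurable_pi_lambda _ hmeas)
    (measurableSet_le (measurable_conformalPValue 0) measurable_const)] at h
  convert h using 2
  ext ω
  simp [conformalPValue, rankCount]

/-- Let `S 0, S 1, ..., S n` be i.i.d. real-valued random variables on a
probability space (`S 0` is the test score, `S 1, ..., S n` the calibration scores).
Define the conformal p-value `p(ω) = (1 + #{i ∈ {1,...,n} : S 0 ω ≤ S i ω}) / (n + 1)`.
Then `p` is a p-variable: for every `α ∈ (0,1)`, `Pr(p ≤ α) ≤ α`. -/
theorem conformal_p_value_is_p_variable
    {Ω : Type*} [MeasurableSpace Ω] (μ : Measure Ω) [IsProbabilityMeasure μ]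
    (n : ℕ) (S : Fin (n + 1) → Ω → ℝ)
    (hmeas : ∀ i, Measurable (S i))
    (hindep : iIndepFun S μ)
    (hident : ∀ i, IdentDistrib (S i) (S 0) μ μ)
    (α : ℝ) (hα : α ∈ Set.Ioo (0 : ℝ) 1) :
    μ {ω | (1 + ((Finset.univ.filter
        fun i : Fin (n + 1) => i ≠ 0 ∧ S 0 ω ≤ S i ω).card : ℝ)) / ((n : ℝ) + 1) ≤ α}
      ≤ ENNReal.ofReal α :=
  conformal_p_value_is_p_variable_general μ n S hmeas hindep hident α
end

section
/- Let S_0, S_1, ..., S_n be real-valued random variables whose joint distribution is exchangeable, i.e., the law of the random vector (S_0, S_1, ..., S_n) in ℝ^{n+1} is invariant under every permutation of the n+1 coordinates. Define p = (1 + #{i ∈ {1,...,n} : S_0 ≤ S_i}) / (n + 1). Then for every α ∈ (0,1), Pr(p ≤ α) ≤ α. -/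
open MeasureTheory ProbabilityTheory
open scoped Classical ENNReal

/-- The full-rank count: number of indices `i` with `x j ≤ x i` (including `j` itself). -/
private noncomputable def fullCount {n : ℕ} (x : Fin (n + 1) → ℝ) (j : Fin (n + 1)) : ℕ :=
  (Finset.univ.filter fun i => x j ≤ x i).card

private lemma fullCount_eq {n : ℕ} (x : Fin (n + 1) → ℝ) (j : Fin (n + 1)) :
    fullCount x j = 1 + (Finset.univ.filter fun i => i ≠ j ∧ x j ≤ x i).card := by
  unfold fullCount
  have h : (Finset.univ.filter fun i => x j ≤ x i)
      = insert j (Finset.univ.filter fun i : Fin (n + 1) => i ≠ j ∧ x j ≤ x i) := by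
    ext i
    simp only [Finset.mem_filter, Finset.mem_insert, Finset.mem_univ, true_and]
    by_cases h : i = j <;> simp [h]
  rw [h, Finset.card_insert_of_notMem (by simp)]
  omega

/-- Deterministic bound: at most `k` indices have full-rank count at most `k`. -/
private lemma fullCount_le_bound {n k : ℕ} (x : Fin (n + 1) → ℝ) :
    (Finset.univ.filter fun j => fullCount x j ≤ k).card ≤ k := by
  set A := Finset.univ.filter fun j : Fin (n + 1) => fullCount x j ≤ k with hA
  rcases A.eq_empty_or_nonempty with h | h
  · simp [h]
  · obtain ⟨j0, hj0, hmin⟩ := A.exists_min_image x h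
    have hsub : A ⊆ Finset.univ.filter fun i => x j0 ≤ x i := by
      intro j hj
      simp only [Finset.mem_filter, Finset.mem_univ, true_and]
      exact hmin j hj
    have h1 := Finset.card_le_card hsub
    have hj0' : fullCount x j0 ≤ k := by
      simpa [hA] using (Finset.mem_filter.mp hj0).2
    unfold fullCount at hj0'
    omega

/-- Reindexing the full count along a permutation. -/
private lemma fullCount_perm {n : ℕ} (x : Fin (n + 1) → ℝ) (σ : Equiv.Perm (Fin (n + 1)))
    (j : Fin (n + 1)) : fullCount (fun i => x (σ i)) j = fullCount x (σ j) := by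
  unfold fullCount
  apply Finset.card_bij' (fun i _ => σ i) (fun i _ => σ.symm i) <;> simp

/-- Let `S 0, S 1, ..., S n` be real-valued random variables whose joint
distribution is exchangeable: the law of the random vector `(S 0, ..., S n)` in `ℝ^{n+1}`
is invariant under every permutation of the `n+1` coordinates. Define the conformal p-value
`p(ω) = (1 + #{i ∈ {1,...,n} : S 0 ω ≤ S i ω}) / (n + 1)`. Then for every `α ∈ (0,1)`,
`Pr(p ≤ α) ≤ α`. -/
theorem conformal_p_value_is_p_variable_of_exchangeable
    {Ω : Type*} [MeasurableSpace Ω] (μ : Measure Ω) [IsProbabilityMeasure μ]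
    (n : ℕ) (S : Fin (n + 1) → Ω → ℝ)
    (hmeas : ∀ i, Measurable (S i))
    (hexch : ∀ σ : Equiv.Perm (Fin (n + 1)),
      Measure.map (fun ω => fun i => S (σ i) ω) μ = Measure.map (fun ω => fun i => S i ω) μ)
    (α : ℝ) (hα : α ∈ Set.Ioo (0 : ℝ) 1) :
    μ {ω | (1 + ((Finset.univ.filter
        fun i : Fin (n + 1) => i ≠ 0 ∧ S 0 ω ≤ S i ω).card : ℝ)) / ((n : ℝ) + 1) ≤ α}
      ≤ ENNReal.ofReal α := by
  obtain ⟨hα0, hα1⟩ := hα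
  have hn1 : (0:ℝ) < (n:ℝ) + 1 := by positivity
  set k : ℕ := ⌊α * ((n:ℝ) + 1)⌋₊ with hk
  -- the threshold characterization
  have hiff : ∀ (x : Fin (n + 1) → ℝ) (j : Fin (n + 1)),
      ((1 + ((Finset.univ.filter fun i : Fin (n + 1) => i ≠ j ∧ x j ≤ x i).card : ℝ))
        / ((n : ℝ) + 1) ≤ α) ↔ fullCount x j ≤ k := by
    intro x j
    rw [div_le_iff₀ hn1, fullCount_eq, hk, Nat.le_floor_iff (by positivity)]
    push_cast
    constructor <;> intro h <;> linarith
  -- the random vector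
  set V : Ω → (Fin (n + 1) → ℝ) := fun ω i => S i ω with hV
  have hVmeas : Measurable V := measurable_pi_lambda _ fun i => hmeas i
  -- the target sets
  set B : Fin (n + 1) → Set (Fin (n + 1) → ℝ) := fun j => {x | fullCount x j ≤ k} with hB
  have hBmeas : ∀ j, MeasurableSet (B j) := by
    intro j
    have hfc : Measurable fun x : Fin (n + 1) → ℝ => fullCount x j := by
      unfold fullCount
      simp only [Finset.card_filter]
      apply Finset.measurable_sum
      intro i _
      apply Measurable.ite _ measurable_const measurable_const
      exact measurableSet_le (measurable_pi_apply j) (measurable_pi_apply i)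
    have : B j = (fun x : Fin (n + 1) → ℝ => fullCount x j) ⁻¹' {m : ℕ | m ≤ k} := rfl
    rw [this]
    exact hfc trivial
  -- all events have the same probability
  have hsame : ∀ j, μ (V ⁻¹' B j) = μ (V ⁻¹' B 0) := by
    intro j
    set σ : Equiv.Perm (Fin (n + 1)) := Equiv.swap 0 j with hσ
    have h0 : σ 0 = j := Equiv.swap_apply_left 0 j
    have hkey : (fun ω => fun i => S (σ i) ω) ⁻¹' B 0 = V ⁻¹' B j := by
      ext ω
      show fullCount (fun i => S (σ i) ω) 0 ≤ k ↔ fullCount (V ω) j ≤ k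
      rw [show (fun i => S (σ i) ω) = (fun i => V ω (σ i)) from rfl, fullCount_perm, h0]
    calc μ (V ⁻¹' B j) = μ ((fun ω => fun i => S (σ i) ω) ⁻¹' B 0) := by rw [hkey]
      _ = Measure.map (fun ω => fun i => S (σ i) ω) μ (B 0) := by
          rw [Measure.map_apply (measurable_pi_lambda _ fun i => hmeas (σ i)) (hBmeas 0)]
      _ = Measure.map (fun ω => fun i => S i ω) μ (B 0) := by rw [hexch σ]
      _ = μ (V ⁻¹' B 0) := Measure.map_apply hVmeas (hBmeas 0)
  -- sum bound via lintegral
  have hAmeas : ∀ j, MeasurableSet (V ⁻¹' B j) := fun j => hVmeas (hBmeas j)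
  have hsum : ∑ j : Fin (n + 1), μ (V ⁻¹' B j) ≤ (k : ℝ≥0∞) := by
    calc ∑ j : Fin (n + 1), μ (V ⁻¹' B j)
        = ∑ j : Fin (n + 1), ∫⁻ ω, (V ⁻¹' B j).indicator (fun _ => (1:ℝ≥0∞)) ω ∂μ := by
          exact Finset.sum_congr rfl fun j _ => (lintegral_indicator_one (hAmeas j)).symm
      _ = ∫⁻ ω, ∑ j : Fin (n + 1), (V ⁻¹' B j).indicator (fun _ => (1:ℝ≥0∞)) ω ∂μ := by
          rw [lintegral_finset_sum]
          exact fun j _ => measurable_one.indicator (hAmeas j)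
      _ ≤ ∫⁻ _, (k : ℝ≥0∞) ∂μ := by
          apply lintegral_mono
          intro ω
          dsimp only
          have : ∑ j : Fin (n + 1), (V ⁻¹' B j).indicator (fun _ => (1:ℝ≥0∞)) ω
              = ((Finset.univ.filter fun j => fullCount (V ω) j ≤ k).card : ℝ≥0∞) := by
            rw [← Finset.sum_boole]
            apply Finset.sum_congr rfl
            intro j _
            simp only [Set.indicator_apply, Set.mem_preimage]
            congr 1
          rw [this]
          exact Nat.cast_le.mpr (fullCount_le_bound (V ω))
      _ = (k : ℝ≥0∞) := by simp
  have hconst : ∑ j : Fin (n + 1), μ (V ⁻¹' B j) = ((n : ℝ≥0∞) + 1) * μ (V ⁻¹' B 0) := by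
    rw [Finset.sum_congr rfl fun j _ => hsame j, Finset.sum_const, Finset.card_univ,
      Fintype.card_fin, nsmul_eq_mul]
    push_cast
    ring
  -- cancel the factor n+1
  have hkle : (k : ℝ≥0∞) ≤ ((n : ℝ≥0∞) + 1) * ENNReal.ofReal α := by
    calc (k : ℝ≥0∞) = ENNReal.ofReal (k : ℝ) := by rw [ENNReal.ofReal_natCast]
      _ ≤ ENNReal.ofReal (α * ((n:ℝ) + 1)) :=
          ENNReal.ofReal_le_ofReal (Nat.floor_le (by positivity))
      _ = ENNReal.ofReal α * ENNReal.ofReal ((n:ℝ) + 1) :=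
          ENNReal.ofReal_mul hα0.le
      _ = ((n : ℝ≥0∞) + 1) * ENNReal.ofReal α := by
          rw [ENNReal.ofReal_add (by positivity) zero_le_one, ENNReal.ofReal_natCast,
            ENNReal.ofReal_one, mul_comm]
  have hmain : ((n : ℝ≥0∞) + 1) * μ (V ⁻¹' B 0) ≤ ((n : ℝ≥0∞) + 1) * ENNReal.ofReal α :=
    hconst ▸ hsum.trans hkle
  have hfinal : μ (V ⁻¹' B 0) ≤ ENNReal.ofReal α := by
    have hne : ((n : ℝ≥0∞) + 1) ≠ 0 := by simp
    have hnt : ((n : ℝ≥0∞) + 1) ≠ ⊤ := by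
      simp [ENNReal.add_ne_top]
    exact (ENNReal.mul_le_mul_iff_right hne hnt).mp hmain
  -- identify the goal set
  have hgoal : {ω | (1 + ((Finset.univ.filter
      fun i : Fin (n + 1) => i ≠ 0 ∧ S 0 ω ≤ S i ω).card : ℝ)) / ((n : ℝ) + 1) ≤ α}
      = V ⁻¹' B 0 := by
    ext ω
    show _ ↔ fullCount (V ω) 0 ≤ k
    exact hiff (V ω) 0
  rw [hgoal]
  exact hfinal
end

section
/- Let (Ω, ℱ, P) be a probability space, let T be a nonempty finite index set, and let (p_t)_{t ∈ T} be random variables such that each p_t is a p-variable, i.e., P(p_t ≤ α') ≤ α' for all α' ∈ (0,1). Let p_targ ∈ (0,1) and set α = (1 − p_targ)/|T|. Then for every measurable map τ : Ω → T, P(p_τ > α) ≥ p_targ, where p_τ(ω) = p_{τ(ω)}(ω). -/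
open MeasureTheory
open scoped ENNReal

/-- Let `(Ω, ℱ, P)` be a probability space, `T` a nonempty finite index set,
and `(p t)_{t ∈ T}` random variables each of which is a p-variable, i.e.
`P (p t ≤ α') ≤ α'` for all `α' ∈ (0,1)`. Let `p_targ ∈ (0,1)` and set
`α = (1 − p_targ)/|T|`. Then for every measurable `τ : Ω → T`,
`P (p_τ > α) ≥ p_targ`, where `p_τ(ω) = p (τ ω) ω`. -/
theorem bonferroni_selected_p_variable
    {Ω T : Type*} [MeasurableSpace Ω] (μ : Measure Ω) [IsProbabilityMeasure μ]
    [Fintype T] [Nonempty T] [MeasurableSpace T] [MeasurableSingletonClass T]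
    (p : T → Ω → ℝ) (hmeas : ∀ t, Measurable (p t))
    (hp : ∀ t, ∀ α' ∈ Set.Ioo (0 : ℝ) 1, μ {ω | p t ω ≤ α'} ≤ ENNReal.ofReal α')
    (ptarg : ℝ) (hptarg : ptarg ∈ Set.Ioo (0 : ℝ) 1)
    (τ : Ω → T) (hτ : Measurable τ) :
    ENNReal.ofReal ptarg ≤
      μ {ω | (1 - ptarg) / (Fintype.card T : ℝ) < p (τ ω) ω} := by
  obtain ⟨hpt0, hpt1⟩ := hptarg
  set n : ℝ := (Fintype.card T : ℝ) with hn
  have hnpos : (0:ℝ) < n := by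
    rw [hn]
    exact_mod_cast Fintype.card_pos
  have hn1 : (1:ℝ) ≤ n := by
    rw [hn]
    exact_mod_cast Fintype.card_pos
  set α : ℝ := (1 - ptarg) / n with hα
  have hα0 : 0 < α := div_pos (by linarith) hnpos
  have hα1 : α < 1 := by
    have : α ≤ 1 - ptarg := by
      rw [hα, div_le_iff₀ hnpos]
      nlinarith
    linarith
  -- the bad event
  set A : Set Ω := {ω | p (τ ω) ω ≤ α} with hA
  have hAeq : A = ⋃ t : T, (τ ⁻¹' {t} ∩ {ω | p t ω ≤ α}) := by
    ext ω
    simp only [Set.mem_iUnion, Set.mem_inter_iff, Set.mem_preimage,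
      Set.mem_singleton_iff, Set.mem_setOf_eq, hA]
    constructor
    · intro h; exact ⟨τ ω, rfl, h⟩
    · rintro ⟨t, ht, h⟩; rw [ht]; exact h
  have hAmeas : MeasurableSet A := by
    rw [hAeq]
    exact MeasurableSet.iUnion fun t =>
      (hτ (measurableSet_singleton t)).inter (measurableSet_le (hmeas t) measurable_const)
  have hAle : μ A ≤ ENNReal.ofReal (1 - ptarg) := by
    calc μ A ≤ ∑ t : T, μ (τ ⁻¹' {t} ∩ {ω | p t ω ≤ α}) := by
          rw [hAeq]; exact measure_iUnion_fintype_le μ _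
      _ ≤ ∑ t : T, ENNReal.ofReal α := by
          refine Finset.sum_le_sum fun t _ => ?_
          exact le_trans (measure_mono Set.inter_subset_right)
            (hp t α ⟨hα0, hα1⟩)
      _ = (Fintype.card T : ℝ≥0∞) * ENNReal.ofReal α := by
          simp [Finset.sum_const, mul_comm]
      _ = ENNReal.ofReal (n * α) := by
          rw [ENNReal.ofReal_mul hnpos.le]
          congr 1
          simp [hn]
      _ = ENNReal.ofReal (1 - ptarg) := by
          congr 1
          rw [hα]
          field_simp
  have hcompl : {ω | α < p (τ ω) ω} = Aᶜ := by
    ext ω; simp [hA, not_le]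
  rw [show {ω | (1 - ptarg) / (Fintype.card T : ℝ) < p (τ ω) ω} = Aᶜ from hcompl]
  rw [measure_compl hAmeas (measure_ne_top μ A)]
  have hμ1 : μ Set.univ = 1 := measure_univ
  rw [hμ1]
  have h1 : ENNReal.ofReal ptarg + ENNReal.ofReal (1 - ptarg) = 1 := by
    rw [← ENNReal.ofReal_add hpt0.le (by linarith)]
    norm_num
  calc ENNReal.ofReal ptarg = 1 - ENNReal.ofReal (1 - ptarg) := by
        rw [← h1]; rw [ENNReal.add_sub_cancel_right (by simp)]
    _ ≤ 1 - μ A := by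
        exact tsub_le_tsub_left hAle 1
end

section
/- Let E be a measurable space, 𝒞 = {1,...,C} a finite label set, and (X_0, C_0), (X_1, C_1), ..., (X_n, C_n) i.i.d. random pairs in E × 𝒞. Let T be a nonempty finite set of checkpoints and, for each t ∈ T, let s_t : E × 𝒞 → ℝ be a measurable score function. For each t ∈ T and c ∈ 𝒞 define p_{t,c}(X_0) = (1 + #{i ∈ {1,...,n} : s_t(X_0, c) ≤ s_t(X_i, C_i)}) / (n + 1), and set Γ_t(X_0) = {c ∈ 𝒞 : p_{t,c}(X_0) > α} with α = (1 − p_targ)/|T| for a given p_targ ∈ (0,1). Then for every measurable stopping rule τ mapping the outcome (i.e., the test input and calibration data) to an element of T, Pr(C_0 ∈ Γ_τ(X_0)) ≥ p_targ. -/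
/-!
For a fixed checkpoint `t` the scores `s t (Z i)` are i.i.d., so their joint law is invariant
under permutations of the indices. Swapping the test index with any other one therefore leaves
the probability that its upper rank is at most `k` unchanged, while for every outcome at most
`k` indices can have upper rank at most `k`; summing over the indices bounds that probability
by `k / (n + 1)`, i.e. the conformal p-value is super-uniform. Miscoverage at the data-dependent
checkpoint `τ` is miscoverage at some fixed checkpoint, so a union bound over `T` bounds it by
`|T| α = 1 - p_targ`.
-/

open MeasureTheory ProbabilityTheory Finset
open scoped ENNReal

section Rank

variable {ι α : Type*} [Fintype ι] [LinearOrder α]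

def upperRank (v : ι → α) (j : ι) : ℕ := #{i | v j ≤ v i}

lemma card_upperRank_le_le (v : ι → α) (k : ℕ) : #{j | upperRank v j ≤ k} ≤ k := by
  obtain h | h := ({j | upperRank v j ≤ k} : Finset ι).eq_empty_or_nonempty
  · simp [h]
  · obtain ⟨j₀, hj₀, hmin⟩ := exists_min_image _ v h
    calc #{j | upperRank v j ≤ k} ≤ upperRank v j₀ :=
          card_le_card fun j hj => by simpa using hmin j hj
      _ ≤ k := by simpa using hj₀

lemma upperRank_comp_swap [DecidableEq ι] (v : ι → α) (j j' : ι) :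
    upperRank (v ∘ Equiv.swap j j') j = upperRank v j' := by
  simp only [upperRank, Function.comp_apply, Equiv.swap_apply_left]
  exact card_equiv (Equiv.swap j j') fun i => by simp

lemma upperRank_eq_one_add_card [DecidableEq ι] (v : ι → α) (j : ι) :
    upperRank v j = 1 + #{i | i ≠ j ∧ v j ≤ v i} := by
  have : ({i | i ≠ j ∧ v j ≤ v i} : Finset ι) = ({i | v j ≤ v i} : Finset ι).erase j := by
    ext; simp
  rw [upperRank, this, add_comm, card_erase_add_one (by simp)]

end Rank

open Classical in
lemma sum_measure_le_of_forall_card_le {Ω ι : Type*} [MeasurableSpace Ω] [Fintype ι]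
    (μ : Measure Ω) {A : ι → Set Ω} (hA : ∀ j, MeasurableSet (A j)) {k : ℕ}
    (hk : ∀ ω, #{j | ω ∈ A j} ≤ k) : ∑ j, μ (A j) ≤ k * μ Set.univ :=
  calc ∑ j, μ (A j) = ∫⁻ ω, ∑ j, (A j).indicator 1 ω ∂μ := by
        rw [lintegral_finsetSum _ fun j _ => measurable_one.indicator (hA j)]
        simp only [lintegral_indicator_one (hA _)]
    _ ≤ ∫⁻ _, (k : ℝ≥0∞) ∂μ := lintegral_mono fun ω => by
        simpa [Set.indicator_apply, sum_boole] using hk ω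
    _ = k * μ Set.univ := lintegral_const _

section Exchangeable

variable {ι : Type*} [Fintype ι]

lemma measurable_upperRank (j : ι) : Measurable fun v : ι → ℝ => upperRank v j := by
  simp_rw [upperRank, card_filter]
  exact measurable_sum _ fun i _ =>
    Measurable.ite (measurableSet_le (measurable_pi_apply j) (measurable_pi_apply i))
      measurable_const measurable_const

lemma card_mul_measure_upperRank_le_le (ν : Measure (ι → ℝ))
    (hν : ∀ e : Equiv.Perm ι, MeasurePreserving (· ∘ e) ν ν) (j : ι) (k : ℕ) :
    Fintype.card ι * ν {v | upperRank v j ≤ k} ≤ k * ν Set.univ := by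
  classical
  have hA : ∀ j', MeasurableSet {v : ι → ℝ | upperRank v j' ≤ k} := fun j' =>
    measurable_upperRank j' measurableSet_Iic
  have hsame : ∀ j', ν {v | upperRank v j' ≤ k} = ν {v | upperRank v j ≤ k} := by
    intro j'
    rw [← (hν (Equiv.swap j j')).measure_preimage (hA j).nullMeasurableSet]
    congr 1
    ext v
    simp [upperRank_comp_swap]
  calc Fintype.card ι * ν {v | upperRank v j ≤ k} = ∑ j', ν {v | upperRank v j' ≤ k} := by
        simp [hsame]
    _ ≤ k * ν Set.univ := sum_measure_le_of_forall_card_le ν hA fun v => by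
        simpa using card_upperRank_le_le v k

/-- For the test index `j = 0` this is the paper's `p_{t,c}`: `j` itself is counted in
`upperRank`, which accounts for the `1 +`. -/
noncomputable def conformalPValue (v : ι → ℝ) (j : ι) : ℝ := upperRank v j / Fintype.card ι

lemma measure_conformalPValue_le_le (ν : Measure (ι → ℝ)) [IsProbabilityMeasure ν]
    (hν : ∀ e : Equiv.Perm ι, MeasurePreserving (· ∘ e) ν ν) (j : ι) (a : ℝ) :
    ν {v | conformalPValue v j ≤ a} ≤ ENNReal.ofReal a := by
  have : Nonempty ι := ⟨j⟩
  have hcard : (0 : ℝ) < Fintype.card ι := by exact_mod_cast Fintype.card_pos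
  set k := ⌊a * Fintype.card ι⌋₊
  have hsub : {v | conformalPValue v j ≤ a} ⊆ {v | upperRank v j ≤ k} := fun v hv =>
    Nat.le_floor ((div_le_iff₀ hcard).1 hv)
  have hk : (k : ℝ≥0∞) ≤ ENNReal.ofReal a * Fintype.card ι := by
    rcases k.eq_zero_or_pos with hk0 | hkpos
    · simp [hk0]
    · rw [← ENNReal.ofReal_natCast (Fintype.card ι), ← ENNReal.ofReal_mul' hcard.le,
        ENNReal.natCast_le_ofReal hkpos.ne']
      exact Nat.floor_le (zero_le_one.trans (Nat.floor_pos.1 hkpos))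
  calc ν {v | conformalPValue v j ≤ a} ≤ ν {v | upperRank v j ≤ k} := measure_mono hsub
    _ ≤ k / Fintype.card ι := by
        rw [ENNReal.le_div_iff_mul_le (Or.inl (by simp)) (Or.inl (by simp)), mul_comm]
        simpa using card_mul_measure_upperRank_le_le ν hν j k
    _ ≤ ENNReal.ofReal a := ENNReal.div_le_of_le_mul hk

lemma measurePreserving_comp_perm_pi (ν : Measure ℝ) [SigmaFinite ν] (e : Equiv.Perm ι) :
    MeasurePreserving (· ∘ e) (Measure.pi fun _ : ι => ν) (Measure.pi fun _ => ν) := by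
  convert measurePreserving_piCongrLeft (fun _ : ι => ν) e.symm using 1
  ext v i
  simp [MeasurableEquiv.piCongrLeft, Equiv.piCongrLeft]

lemma ProbabilityTheory.iIndepFun.measure_conformalPValue_le {Ω : Type*} [MeasurableSpace Ω]
    {μ : Measure Ω} [IsProbabilityMeasure μ] {V : ι → Ω → ℝ} (hind : iIndepFun V μ)
    {j : ι} (hid : ∀ i, IdentDistrib (V i) (V j) μ μ) (a : ℝ) :
    μ {ω | conformalPValue (fun i => V i ω) j ≤ a} ≤ ENNReal.ofReal a := by
  have hW : AEMeasurable (fun ω i => V i ω) μ :=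
    aemeasurable_pi_lambda _ fun i => (hid i).aemeasurable_fst
  have hlaw : μ.map (fun ω i => V i ω) = Measure.pi fun _ => μ.map (V j) := by
    rw [hind.map_fun_eq_pi_map fun i => (hid i).aemeasurable_fst]
    simp_rw [(hid _).map_eq]
  have : IsProbabilityMeasure (μ.map (V j)) :=
    Measure.isProbabilityMeasure_map (hid j).aemeasurable_fst
  have : IsProbabilityMeasure (μ.map (fun ω i => V i ω)) := Measure.isProbabilityMeasure_map hW
  calc μ {ω | conformalPValue (fun i => V i ω) j ≤ a}
      ≤ μ.map (fun ω i => V i ω) {v | conformalPValue v j ≤ a} := Measure.le_map_apply hW _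
    _ ≤ ENNReal.ofReal a := measure_conformalPValue_le_le _
        (hlaw ▸ measurePreserving_comp_perm_pi _) j a

end Exchangeable

lemma ofReal_le_measure_of_measure_compl_le {Ω : Type*} [MeasurableSpace Ω] {μ : Measure Ω}
    [IsProbabilityMeasure μ] {s : Set Ω} {p : ℝ} (hp : p ≤ 1)
    (h : μ sᶜ ≤ ENNReal.ofReal (1 - p)) : ENNReal.ofReal p ≤ μ s := by
  rcases le_total p 0 with hp0 | hp0
  · simp [ENNReal.ofReal_of_nonpos hp0]
  refine ENNReal.le_of_add_le_add_right ENNReal.ofReal_ne_top (a := ENNReal.ofReal (1 - p)) ?_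
  calc ENNReal.ofReal p + ENNReal.ofReal (1 - p) = μ Set.univ := by
        rw [← ENNReal.ofReal_add hp0 (by linarith), measure_univ]
        simp
    _ ≤ μ s + μ sᶜ := measure_univ_le_add_compl s
    _ ≤ μ s + ENNReal.ofReal (1 - p) := by gcongr

theorem spikecp_reliability_general
    {Ω E T : Type*} [MeasurableSpace Ω] [MeasurableSpace E]
    (μ : Measure Ω) [IsProbabilityMeasure μ]
    [Fintype T] [Nonempty T]
    (n C : ℕ)
    (Z : Fin (n + 1) → Ω → E × Fin C)
    (hindep : iIndepFun Z μ)
    (hident : ∀ i, IdentDistrib (Z i) (Z 0) μ μ)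
    (s : T → E × Fin C → ℝ) (hs : ∀ t, Measurable (s t))
    (ptarg : ℝ) (hptarg : ptarg ∈ Set.Ioo (0 : ℝ) 1)
    (τ : Ω → T) :
    ENNReal.ofReal ptarg ≤
      μ {ω | (Z 0 ω).2 ∈ {c : Fin C |
        (1 - ptarg) / (Fintype.card T : ℝ) <
          (1 + ((Finset.univ.filter
              fun i : Fin (n + 1) => i ≠ 0 ∧ s (τ ω) ((Z 0 ω).1, c) ≤ s (τ ω) (Z i ω)).card : ℝ))
            / ((n : ℝ) + 1)}} := by
  set α := (1 - ptarg) / (Fintype.card T : ℝ) with hα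
  have hmiss : ∀ t,
      μ {ω | conformalPValue (fun i => s t (Z i ω)) 0 ≤ α} ≤ ENNReal.ofReal α :=
    fun t => (hindep.comp _ fun _ => hs t).measure_conformalPValue_le
      (fun i => (hident i).comp (hs t)) α
  refine ofReal_le_measure_of_measure_compl_le hptarg.2.le ?_
  calc μ _ ≤ μ (⋃ t, {ω | conformalPValue (fun i => s t (Z i ω)) 0 ≤ α}) := by
        refine measure_mono fun ω hω => Set.mem_iUnion.2 ⟨τ ω, ?_⟩
        simpa [conformalPValue, upperRank_eq_one_add_card] using hω
    _ ≤ ∑ t, μ {ω | conformalPValue (fun i => s t (Z i ω)) 0 ≤ α} :=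
        measure_iUnion_fintype_le _ _
    _ ≤ ∑ _t : T, ENNReal.ofReal α := sum_le_sum fun t _ => hmiss t
    _ = ENNReal.ofReal (1 - ptarg) := by
        rw [sum_const, card_univ, nsmul_eq_mul, ← ENNReal.ofReal_natCast,
          ← ENNReal.ofReal_mul (by positivity), hα, mul_div_cancel₀ _ (by positivity)]

/-- Let `(X 0, C 0), ..., (X n, C n)` (written `Z i = (X i, C i)`) be i.i.d.
random pairs in `E × 𝒞` with `𝒞 = Fin C`, let `T` be a nonempty finite set of checkpoints,
and for each `t ∈ T` let `s t : E × 𝒞 → ℝ` be a measurable score function. Define the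
conformal p-values `p_{t,c}(X 0) = (1 + #{i ∈ {1,...,n} : s t (X 0, c) ≤ s t (X i, C i)})/(n+1)`
and prediction sets `Γ_t(X 0) = {c : p_{t,c}(X 0) > α}` with `α = (1 − p_targ)/|T|`,
`p_targ ∈ (0,1)`. Then for every measurable stopping rule `τ` (mapping the outcome to an
element of `T`), `Pr(C 0 ∈ Γ_{τ}(X 0)) ≥ p_targ`. -/
theorem spikecp_reliability
    {Ω E T : Type*} [MeasurableSpace Ω] [MeasurableSpace E]
    (μ : Measure Ω) [IsProbabilityMeasure μ]
    [Fintype T] [Nonempty T] [MeasurableSpace T] [MeasurableSingletonClass T]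
    (n C : ℕ) (hC : 0 < C)
    (Z : Fin (n + 1) → Ω → E × Fin C)
    (hmeas : ∀ i, Measurable (Z i))
    (hindep : iIndepFun Z μ)
    (hident : ∀ i, IdentDistrib (Z i) (Z 0) μ μ)
    (s : T → E × Fin C → ℝ) (hs : ∀ t, Measurable (s t))
    (ptarg : ℝ) (hptarg : ptarg ∈ Set.Ioo (0 : ℝ) 1)
    (τ : Ω → T) (hτ : Measurable τ) :
    ENNReal.ofReal ptarg ≤
      μ {ω | (Z 0 ω).2 ∈ {c : Fin C |
        (1 - ptarg) / (Fintype.card T : ℝ) <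
          (1 + ((Finset.univ.filter
              fun i : Fin (n + 1) => i ≠ 0 ∧ s (τ ω) ((Z 0 ω).1, c) ≤ s (τ ω) (Z i ω)).card : ℝ))
            / ((n : ℝ) + 1)}} :=
  spikecp_reliability_general μ n C Z hindep hident s hs ptarg hptarg τ
end
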